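/- Let A be a von Neumann algebra, H a complex Hilbert space, P ∈ L(H) a positive operator, and Φ ∈ CP_P(A;H) with minimal Stinespring dilation (M, π, J). Then Φ is an extremal point of the convex set CP_P(A;H) if and only if for every operator E ∈ L(M), the conditions [E, π(a)] = 0 for all a ∈ A and J*EJ = 0 imply E = 0. -/

import Mathlib

open scoped ComplexOrder ComplexInnerProductSpace Topology

noncomputable section

/-- A linear map `Φ : A → L(H)` from a `*`-algebra into the bounded operators on a complex
Hilbert space `H` is *completely positive* if for all `n`, `a₁, …, aₙ ∈ A` and
`φ₁, …, φₙ ∈ H` one has `∑ j k, ⟪φ j, Φ (star (a j) * a k) (φ k)⟫ ≥ 0`. -/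
def IsCompletelyPositive {A : Type*} [NonUnitalNonAssocSemiring A] [StarRing A] [Module ℂ A]
    {H : Type*} [NormedAddCommGroup H] [InnerProductSpace ℂ H]
    (Φ : A →ₗ[ℂ] H →L[ℂ] H) : Prop :=
  ∀ (n : ℕ) (a : Fin n → A) (v : Fin n → H),
    0 ≤ ∑ j, ∑ k, ⟪v j, Φ (star (a j) * a k) (v k)⟫

/-- The convex set `CP_P(A;H)` of completely positive maps `Φ : A → L(H)` with `Φ 1 = P`. -/
def CPWithUnit (A : Type*) [Ring A] [StarRing A] [Algebra ℂ A]
    (H : Type*) [NormedAddCommGroup H] [InnerProductSpace ℂ H]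
    (P : H →L[ℂ] H) : Set (A →ₗ[ℂ] H →L[ℂ] H) :=
  {Φ | IsCompletelyPositive Φ ∧ Φ 1 = P}

/-- `x` is an extremal point of the convex set `S`: whenever `x` is a nontrivial convex
combination of two members of `S`, they coincide. -/
def IsExtremalIn {V : Type*} [AddCommMonoid V] [Module ℂ V] (S : Set V) (x : V) : Prop :=
  x ∈ S ∧ ∀ y ∈ S, ∀ z ∈ S, ∀ t : ℝ, 0 < t → t < 1 →
    x = (t : ℂ) • y + ((1 - t : ℝ) : ℂ) • z → y = z

/-- `(M, π, J)` is a *minimal Stinespring dilation* of `Φ : A → L(H)`: `π` is a unital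
`*`-representation of `A` on `M`, `J : H → M` is bounded linear, `Φ a = J⋆ ∘ π a ∘ J`, and
the span of `{π a (J v)}` is dense in `M`. -/
structure IsMinimalStinespring {A : Type*} [Ring A] [StarRing A] [Algebra ℂ A]
    {H M : Type*} [NormedAddCommGroup H] [InnerProductSpace ℂ H] [CompleteSpace H]
    [NormedAddCommGroup M] [InnerProductSpace ℂ M] [CompleteSpace M]
    (Φ : A →ₗ[ℂ] H →L[ℂ] H) (π : A →⋆ₐ[ℂ] (M →L[ℂ] M)) (J : H →L[ℂ] M) : Prop where
  dilation : ∀ a : A, Φ a = (ContinuousLinearMap.adjoint J) ∘L π a ∘L J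
  minimal : Dense (↑(Submodule.span ℂ {m : M | ∃ (a : A) (v : H), m = π a (J v)}) : Set M)

/-!
Arveson's Radon–Nikodym theorem does the work. Model the algebraic tensor product `A ⊙ H` by
`A →₀ H`; a completely positive `Ψ` defines on it the positive form
`⟪∑ aᵢ ⊗ vᵢ, ∑ bⱼ ⊗ wⱼ⟫_Ψ = ∑ ⟪vᵢ, Ψ (aᵢ⋆ bⱼ) wⱼ⟫`, and for `Ψ = Φ` this is the inner product of
the images `∑ π aᵢ (J vᵢ)` in `M`. If `Φ - Ψ` is also completely positive, Cauchy–Schwarz bounds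
the `Ψ`-form by the norms in `M`, so it extends from the dense image to `M` and is represented by
an operator `T` in the commutant of `π` with `Ψ a = J⋆ T π(a) J`.

If `Φ = t Φ₁ + (1 - t) Φ₂`, apply this to `Ψ = t Φ₁`: then `T - t` commutes with `π` and is
killed by `J⋆ · J`, so `T = t` and `Φ₁ = Φ = Φ₂`. Conversely, a self-adjoint `E` of norm at most
one in the commutant with `J⋆ E J = 0` writes `Φ` as the midpoint of the compressions of
`1 + E` and `1 - E`, both in `CP_P(A;H)`; extremality forces `J⋆ E π(·) J = 0`, hence `E = 0` by
minimality. A general `E` is handled through its real and imaginary parts.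
-/

open ContinuousLinearMap

namespace LinearMap

variable {V : Type*} [AddCommGroup V] [Module ℂ V] {B : V →ₗ⋆[ℂ] V →ₗ[ℂ] ℂ}

theorem IsNonneg.isSymm (hB : B.IsNonneg) : B.IsSymm := by
  have him : ∀ x, (B x x).im = 0 := fun x => (Complex.nonneg_iff.1 (hB.nonneg x)).2.symm
  refine ⟨fun x y => ?_⟩
  have h₁ := him (x + y)
  have h₂ := him (x + Complex.I • y)
  simp [him x, him y] at h₁ h₂
  apply Complex.ext <;> simp <;> linarith

theorem IsPosSemidef.norm_sq_apply_le (hB : B.IsPosSemidef) (x y : V) :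
    ‖B x y‖ ^ 2 ≤ (B x x).re * (B y y).re := by
  let core : PreInnerProductSpace.Core ℂ V :=
    { inner x y := B x y
      conj_inner_symm x y := hB.isSymm.eq y x
      re_inner_nonneg x := (Complex.nonneg_iff.1 (hB.nonneg x)).1
      add_left x y z := by simp
      smul_left x y r := by simp }
  have : ‖B x y‖ * ‖B y x‖ ≤ (B x x).re * (B y y).re :=
    InnerProductSpace.Core.inner_mul_inner_self_le (c := core) x y
  rwa [← hB.isSymm.eq x y, Complex.norm_conj, ← sq] at this

theorem exists_continuousLinearMap_inner_eq {W M : Type*} [AddCommGroup W]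
    [Module ℂ W] [NormedAddCommGroup M] [InnerProductSpace ℂ M] [CompleteSpace M]
    {L : W →ₗ[ℂ] M} (hL : DenseRange L) (B : W →ₗ⋆[ℂ] W →ₗ[ℂ] ℂ)
    (hB : ∀ f g, ‖B f g‖ ≤ ‖L f‖ * ‖L g‖) :
    ∃ T : M →L[ℂ] M, ∀ f g, ⟪L f, T (L g)⟫ = B f g := by
  -- Extend `B` in its second variable, then, as a conjugate-linear map into the dual of `M`, in
  -- its first; the resulting bounded sesquilinear form on `M` is represented by an operator.
  have hB₁ : ∀ f g, (B f).extendOfNorm L (L g) = B f g := fun f g =>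
    extendOfNorm_eq hL ⟨_, hB f⟩ g
  let B₁ : W →ₗ⋆[ℂ] M →L[ℂ] ℂ :=
    { toFun f := (B f).extendOfNorm L
      map_add' f f' := extendOfNorm_unique hL _ (hB (f + f')) _ <| by ext; simp [hB₁]
      map_smul' c f := extendOfNorm_unique hL _ (hB (c • f)) _ <| by ext; simp [hB₁] }
  have hB₁norm : ∀ f, ‖B₁ f‖ ≤ 1 * ‖L f‖ := fun f => by
    rw [one_mul]; exact opNorm_extendOfNorm_le hL (norm_nonneg _) (hB f)
  refine ⟨ContinuousLinearMap.adjoint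
    (InnerProductSpace.continuousLinearMapOfBilin (B₁.extendOfNorm L)), fun f g => ?_⟩
  rw [ContinuousLinearMap.adjoint_inner_right, InnerProductSpace.continuousLinearMapOfBilin_apply,
    extendOfNorm_eq hL ⟨1, hB₁norm⟩]
  exact hB₁ f g

end LinearMap

theorem IsSelfAdjoint.one_sub_nonneg {B : Type*} [CStarAlgebra B] [PartialOrder B]
    [StarOrderedRing B] {b : B} (hb : IsSelfAdjoint b) (h : ‖b‖ ≤ 1) : 0 ≤ 1 - b := by
  rw [sub_nonneg]
  calc b ≤ algebraMap ℝ B ‖b‖ := hb.le_algebraMap_norm_self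
    _ ≤ algebraMap ℝ B 1 := algebraMap_mono B h
    _ = 1 := map_one _

theorem Submodule.eq_zero_of_forall_isSelfAdjoint {R : Type*} [AddCommGroup R] [Module ℂ R]
    [StarAddMonoid R] [StarModule ℂ R] {S : Submodule ℂ R} (hS : ∀ x ∈ S, star x ∈ S)
    (h : ∀ x ∈ S, IsSelfAdjoint x → x = 0) {x : R} (hx : x ∈ S) : x = 0 := by
  have hre : (realPart x : R) ∈ S := by
    rw [realPart_apply_coe]
    exact S.smul_of_tower_mem _ (S.add_mem hx (hS x hx))
  have him : (imaginaryPart x : R) ∈ S := by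
    rw [imaginaryPart_apply_coe]
    exact S.smul_mem _ (S.smul_of_tower_mem _ (S.sub_mem hx (hS x hx)))
  rw [← realPart_add_I_smul_imaginaryPart x, h _ hre (realPart x).2,
    h _ him (imaginaryPart x).2, smul_zero, add_zero]

namespace IsCompletelyPositive

variable {A : Type*} [NonUnitalNonAssocSemiring A] [StarRing A] [Module ℂ A]
  {H : Type*} [NormedAddCommGroup H] [InnerProductSpace ℂ H] {Ψ : A →ₗ[ℂ] H →L[ℂ] H}

theorem sum_nonneg (hΨ : IsCompletelyPositive Ψ) {ι : Type*} (s : Finset ι) (a : ι → A)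
    (v : ι → H) : 0 ≤ ∑ j ∈ s, ∑ k ∈ s, ⟪v j, Ψ (star (a j) * a k) (v k)⟫ := by
  let e := s.equivFin.symm
  calc 0 ≤ ∑ j, ∑ k, ⟪v (e j), Ψ (star (a (e j)) * a (e k)) (v (e k))⟫ :=
        hΨ s.card (fun i => a (e i)) (fun i => v (e i))
    _ = ∑ j : s, ∑ k : s, ⟪v j, Ψ (star (a j) * a k) (v k)⟫ :=
        Fintype.sum_equiv e _ _ fun j => Fintype.sum_equiv e _ _ fun k => rfl
    _ = _ := by
        rw [← s.sum_coe_sort]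
        exact Finset.sum_congr rfl fun j _ =>
          s.sum_coe_sort fun k => ⟪v j, Ψ (star (a j) * a k) (v k)⟫

theorem smul (hΨ : IsCompletelyPositive Ψ) {c : ℂ} (hc : 0 ≤ c) :
    IsCompletelyPositive (c • Ψ) := fun n a v => by
  simpa [inner_smul_right, Finset.mul_sum] using mul_nonneg hc (hΨ n a v)

end IsCompletelyPositive

section StinespringForm

variable {A : Type*} [NonUnitalNonAssocSemiring A] [StarRing A] [Module ℂ A]
  {H : Type*} [NormedAddCommGroup H] [InnerProductSpace ℂ H]

def stinespringForm (Ψ : A →ₗ[ℂ] H →L[ℂ] H) : (A →₀ H) →ₗ⋆[ℂ] (A →₀ H) →ₗ[ℂ] ℂ :=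
  LinearMap.mk₂'ₛₗ (starRingEnd ℂ) (RingHom.id ℂ)
    (fun f g => f.sum fun a v => g.sum fun b w => ⟪v, Ψ (star a * b) w⟫)
    (fun f f' g => Finsupp.sum_add_index' (by simp) (by simp [Finsupp.sum_add]))
    (fun c f g => by
      rw [Finsupp.sum_smul_index' (by simp)]
      simp only [Finsupp.sum, Finset.mul_sum, inner_smul_left, smul_eq_mul])
    (fun f g g' => by
      rw [← Finsupp.sum_add]
      exact Finsupp.sum_congr fun a _ => Finsupp.sum_add_index' (by simp) (by simp))
    (fun c f g => by
      simp only [Finsupp.sum_smul_index' (h := fun b w => ⟪_, Ψ (star _ * b) w⟫) (by simp)]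
      simp only [Finsupp.sum, Finset.mul_sum, map_smul, inner_smul_right, smul_eq_mul,
        RingHom.id_apply])

theorem stinespringForm_single (Ψ : A →ₗ[ℂ] H →L[ℂ] H) (a b : A) (v w : H) :
    stinespringForm Ψ (Finsupp.single a v) (Finsupp.single b w) = ⟪v, Ψ (star a * b) w⟫ := by
  simp [stinespringForm]

theorem stinespringForm_sub (Φ Ψ : A →ₗ[ℂ] H →L[ℂ] H) :
    stinespringForm (Φ - Ψ) = stinespringForm Φ - stinespringForm Ψ := by
  ext f g
  simp [stinespringForm, Finsupp.sum_sub]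

theorem IsCompletelyPositive.isPosSemidef_stinespringForm {Ψ : A →ₗ[ℂ] H →L[ℂ] H}
    (hΨ : IsCompletelyPositive Ψ) : (stinespringForm Ψ).IsPosSemidef :=
  have hnonneg : (stinespringForm Ψ).IsNonneg := ⟨fun f => hΨ.sum_nonneg f.support id f⟩
  ⟨hnonneg.isSymm, hnonneg⟩

end StinespringForm

section Dilation

variable {A : Type*} [Ring A] [StarRing A] [Algebra ℂ A]
  {H M : Type*} [NormedAddCommGroup H] [InnerProductSpace ℂ H]
  [NormedAddCommGroup M] [InnerProductSpace ℂ M] [CompleteSpace M]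
  {π : A →⋆ₐ[ℂ] (M →L[ℂ] M)} {J : H →L[ℂ] M}

def stinespringMap (π : A →⋆ₐ[ℂ] (M →L[ℂ] M)) (J : H →L[ℂ] M) : (A →₀ H) →ₗ[ℂ] M :=
  Finsupp.lsum ℂ fun a => (π a ∘L J).toLinearMap

theorem stinespringMap_single (a : A) (v : H) :
    stinespringMap π J (Finsupp.single a v) = π a (J v) := by
  simp [stinespringMap]

variable [CompleteSpace H]

def compression (π : A →⋆ₐ[ℂ] (M →L[ℂ] M)) (J : H →L[ℂ] M) :
    (M →L[ℂ] M) →ₗ[ℂ] A →ₗ[ℂ] H →L[ℂ] H :=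
  LinearMap.mk₂ ℂ (fun C a => adjoint J ∘L C ∘L π a ∘L J)
    (fun C C' a => by simp [add_comp, comp_add])
    (fun c C a => by simp [smul_comp])
    (fun C a a' => by simp [add_comp, comp_add])
    (fun c C a => by simp [smul_comp])

theorem compression_apply (C : M →L[ℂ] M) (a : A) :
    compression π J C a = adjoint J ∘L C ∘L π a ∘L J := rfl

theorem compression_apply_one (C : M →L[ℂ] M) :
    compression π J C 1 = adjoint J ∘L C ∘L J := by
  rw [compression_apply, map_one, one_def, id_comp]

theorem inner_compression_star_mul {C : M →L[ℂ] M} (hC : ∀ a, Commute C (π a)) (a b : A)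
    (v w : H) : ⟪v, compression π J C (star a * b) w⟫ = ⟪π a (J v), C (π b (J w))⟫ := by
  rw [compression_apply, comp_apply, adjoint_inner_right, comp_apply, comp_apply, map_mul,
    mul_apply_eq_comp, ← mul_apply_eq_comp C, (hC _).eq, mul_apply_eq_comp, map_star,
    star_eq_adjoint, adjoint_inner_right]

theorem isCompletelyPositive_compression {C : M →L[ℂ] M} (hC : 0 ≤ C)
    (hcomm : ∀ a, Commute C (π a)) : IsCompletelyPositive (compression π J C) := by
  intro n a v
  simp_rw [inner_compression_star_mul hcomm, ← inner_sum, ← map_sum, ← sum_inner]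
  exact ((nonneg_iff_isPositive C).1 hC).inner_nonneg_right _

def commutantCompressionKer (π : A →⋆ₐ[ℂ] (M →L[ℂ] M)) (J : H →L[ℂ] M) :
    Submodule ℂ (M →L[ℂ] M) where
  carrier := {E | (∀ a, Commute E (π a)) ∧ adjoint J ∘L E ∘L J = 0}
  add_mem' hE hF :=
    ⟨fun a => (hE.1 a).add_left (hF.1 a), by simp [add_comp, comp_add, hE.2, hF.2]⟩
  zero_mem' := ⟨fun a => Commute.zero_left _, by simp⟩
  smul_mem' c E hE := ⟨fun a => (hE.1 a).smul_left c, by simp [smul_comp, hE.2]⟩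

theorem star_mem_commutantCompressionKer {E : M →L[ℂ] M}
    (hE : E ∈ commutantCompressionKer π J) : star E ∈ commutantCompressionKer π J := by
  refine ⟨fun a => ?_, ?_⟩
  · have := (hE.1 (star a)).star_star
    rwa [← map_star, star_star] at this
  · have := congr(adjoint $(hE.2))
    simpa [adjoint_comp, star_eq_adjoint, comp_assoc] using this

end Dilation

namespace IsMinimalStinespring

variable {A : Type*} [Ring A] [StarRing A] [Algebra ℂ A]
  {H M : Type*} [NormedAddCommGroup H] [InnerProductSpace ℂ H] [CompleteSpace H]
  [NormedAddCommGroup M] [InnerProductSpace ℂ M] [CompleteSpace M]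
  {P : H →L[ℂ] H} {Φ Ψ : A →ₗ[ℂ] H →L[ℂ] H} {π : A →⋆ₐ[ℂ] (M →L[ℂ] M)} {J : H →L[ℂ] M}

theorem compression_one (hdil : IsMinimalStinespring Φ π J) : compression π J 1 = Φ :=
  LinearMap.ext fun a => by rw [compression_apply, one_def, id_comp, hdil.dilation]

theorem inner_apply_apply (hdil : IsMinimalStinespring Φ π J) (a b : A) (v w : H) :
    ⟪π a (J v), π b (J w)⟫ = ⟪v, Φ (star a * b) w⟫ := by
  simpa [hdil.compression_one] using
    (inner_compression_star_mul (J := J) (fun c => Commute.one_left (π c)) a b v w).symm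

theorem ext_inner (hdil : IsMinimalStinespring Φ π J) {S S' : M →L[ℂ] M}
    (h : ∀ a v b w, ⟪π a (J v), S (π b (J w))⟫ = ⟪π a (J v), S' (π b (J w))⟫) : S = S' := by
  refine ext_on hdil.minimal ?_
  rintro _ ⟨b, w, rfl⟩
  have : innerSLFlip ℂ (S (π b (J w))) = innerSLFlip ℂ (S' (π b (J w))) :=
    ext_on hdil.minimal (by rintro _ ⟨a, v, rfl⟩; simpa using h a v b w)
  exact ext_inner_left ℂ fun x => by simpa using congr($this x)

theorem eq_zero_of_compression_eq_zero (hdil : IsMinimalStinespring Φ π J) {C : M →L[ℂ] M}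
    (hcomm : ∀ a, Commute C (π a)) (hC : compression π J C = 0) : C = 0 :=
  hdil.ext_inner fun a v b w => by
    rw [← inner_compression_star_mul hcomm, hC]
    simp

theorem denseRange_stinespringMap (hdil : IsMinimalStinespring Φ π J) :
    DenseRange (stinespringMap π J) := by
  have hspan : Submodule.span ℂ {m : M | ∃ (a : A) (v : H), m = π a (J v)} ≤
      LinearMap.range (stinespringMap π J) := Submodule.span_le.2 <| by
    rintro _ ⟨a, v, rfl⟩
    exact ⟨Finsupp.single a v, stinespringMap_single a v⟩
  exact hdil.minimal.mono hspan

theorem inner_stinespringMap (hdil : IsMinimalStinespring Φ π J) (f g : A →₀ H) :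
    ⟪stinespringMap π J f, stinespringMap π J g⟫ = stinespringForm Φ f g := by
  simp only [stinespringMap, stinespringForm, Finsupp.lsum_apply, LinearMap.mk₂'ₛₗ_apply,
    Finsupp.sum, sum_inner, inner_sum, coe_coe, comp_apply, hdil.inner_apply_apply]
  exact Finset.sum_comm

theorem norm_stinespringForm_le (hdil : IsMinimalStinespring Φ π J)
    (hΨ : IsCompletelyPositive Ψ) (hdom : IsCompletelyPositive (Φ - Ψ)) (f g : A →₀ H) :
    ‖stinespringForm Ψ f g‖ ≤ ‖stinespringMap π J f‖ * ‖stinespringMap π J g‖ := by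
  have hdiag : ∀ f, (stinespringForm Ψ f f).re ≤ ‖stinespringMap π J f‖ ^ 2 := fun f => by
    have := (Complex.nonneg_iff.1 (hdom.isPosSemidef_stinespringForm.nonneg f)).1
    rw [stinespringForm_sub, LinearMap.sub_apply, LinearMap.sub_apply, Complex.sub_re,
      ← hdil.inner_stinespringMap] at this
    have h := inner_self_eq_norm_sq (𝕜 := ℂ) (stinespringMap π J f)
    rw [RCLike.re_to_complex] at h
    linarith
  rw [← sq_le_sq₀ (norm_nonneg _) (by positivity), mul_pow]
  have hpsd := hΨ.isPosSemidef_stinespringForm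
  calc ‖stinespringForm Ψ f g‖ ^ 2 ≤ (stinespringForm Ψ f f).re * (stinespringForm Ψ g g).re :=
        hpsd.norm_sq_apply_le f g
    _ ≤ _ := mul_le_mul (hdiag f) (hdiag g) (Complex.nonneg_iff.1 (hpsd.nonneg g)).1
        (by positivity)

theorem exists_commute_compression_eq (hdil : IsMinimalStinespring Φ π J)
    (hΨ : IsCompletelyPositive Ψ) (hdom : IsCompletelyPositive (Φ - Ψ)) :
    ∃ T : M →L[ℂ] M, (∀ a, Commute T (π a)) ∧ compression π J T = Ψ := by
  obtain ⟨T, hT⟩ := LinearMap.exists_continuousLinearMap_inner_eq hdil.denseRange_stinespringMap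
    (stinespringForm Ψ) (hdil.norm_stinespringForm_le hΨ hdom)
  have hmatrix : ∀ a v b w, ⟪π a (J v), T (π b (J w))⟫ = ⟪v, Ψ (star a * b) w⟫ :=
    fun a v b w => by
      simpa [stinespringMap_single, stinespringForm_single] using
        hT (Finsupp.single a v) (Finsupp.single b w)
  have hcomm : ∀ c, Commute T (π c) := fun c => hdil.ext_inner fun a v b w =>
    calc ⟪π a (J v), (T * π c) (π b (J w))⟫ = ⟪v, Ψ (star a * (c * b)) w⟫ := by
          rw [mul_apply_eq_comp, ← mul_apply_eq_comp (π c), ← map_mul, hmatrix]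
      _ = ⟪v, Ψ (star (star c * a) * b) w⟫ := by rw [star_mul, star_star, mul_assoc]
      _ = ⟪π a (J v), (π c * T) (π b (J w))⟫ := by
          rw [← hmatrix, mul_apply_eq_comp, map_mul, mul_apply_eq_comp, map_star,
            star_eq_adjoint, adjoint_inner_left]
  refine ⟨T, hcomm, LinearMap.ext fun a => ext fun w => ext_inner_left ℂ fun v => ?_⟩
  simpa using (inner_compression_star_mul hcomm 1 a v w).trans (hmatrix 1 v a w)

theorem isExtremalIn_of_commutantCompressionKer_eq_bot (hdil : IsMinimalStinespring Φ π J)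
    (hΦ : Φ ∈ CPWithUnit A H P) (h : commutantCompressionKer π J = ⊥) :
    IsExtremalIn (CPWithUnit A H P) Φ := by
  refine ⟨hΦ, fun Φ₁ hΦ₁ Φ₂ hΦ₂ t ht₀ ht₁ hconv => ?_⟩
  have ht : (t : ℂ) ≠ 0 := by exact_mod_cast ht₀.ne'
  have ht' : ((1 - t : ℝ) : ℂ) ≠ 0 := by exact_mod_cast (sub_pos.2 ht₁).ne'
  have hdom : IsCompletelyPositive (Φ - (t : ℂ) • Φ₁) := by
    rw [hconv, add_sub_cancel_left]
    exact hΦ₂.1.smul (by exact_mod_cast (sub_pos.2 ht₁).le)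
  obtain ⟨T, hTcomm, hT⟩ :=
    hdil.exists_commute_compression_eq (hΦ₁.1.smul (by exact_mod_cast ht₀.le)) hdom
  have hker : T - (t : ℂ) • 1 ∈ commutantCompressionKer π J := by
    refine ⟨fun a => (hTcomm a).sub_left ((Commute.one_left _).smul_left _), ?_⟩
    rw [← compression_apply_one (π := π), map_sub, map_smul, hdil.compression_one, hT,
      LinearMap.sub_apply, LinearMap.smul_apply, LinearMap.smul_apply, hΦ.2, hΦ₁.2, sub_self]
  have hTt : T - (t : ℂ) • 1 = 0 := (Submodule.eq_bot_iff _).1 h _ hker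
  have hΦ₁Φ : Φ₁ = Φ := smul_right_injective _ ht <| by
    show (t : ℂ) • Φ₁ = (t : ℂ) • Φ
    rw [← hT, sub_eq_zero.1 hTt, map_smul, hdil.compression_one]
  have hΦ₂Φ : Φ₂ = Φ := smul_right_injective _ ht' <| by
    show ((1 - t : ℝ) : ℂ) • Φ₂ = ((1 - t : ℝ) : ℂ) • Φ
    rw [hΦ₁Φ] at hconv
    push_cast at hconv ⊢
    linear_combination (norm := module) -hconv
  rw [hΦ₁Φ, hΦ₂Φ]

theorem eq_zero_of_isExtremalIn_of_norm_le_one (hdil : IsMinimalStinespring Φ π J)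
    (hext : IsExtremalIn (CPWithUnit A H P) Φ) {E : M →L[ℂ] M}
    (hE : E ∈ commutantCompressionKer π J) (hsa : IsSelfAdjoint E) (hnorm : ‖E‖ ≤ 1) :
    E = 0 := by
  have hmem : ∀ F ∈ commutantCompressionKer π J, IsSelfAdjoint F → ‖F‖ ≤ 1 →
      compression π J (1 - F) ∈ CPWithUnit A H P := fun F hF hFsa hFnorm =>
    ⟨isCompletelyPositive_compression (hFsa.one_sub_nonneg hFnorm)
        fun a => (Commute.one_left _).sub_left (hF.1 a),
      by rw [map_sub, hdil.compression_one, LinearMap.sub_apply, compression_apply_one, hF.2,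
        sub_zero, hext.1.2]⟩
  have hsplit := hext.2 _ (hmem (-E) (neg_mem hE) hsa.neg (by rwa [norm_neg])) _
    (hmem E hE hsa hnorm) (1 / 2) (by norm_num) (by norm_num) <| by
      rw [map_sub, map_sub, map_neg, hdil.compression_one]
      push_cast
      module
  refine hdil.eq_zero_of_compression_eq_zero hE.1 ?_
  rw [map_sub, map_sub, map_neg] at hsplit
  linear_combination (norm := module) (1 / 2 : ℂ) • hsplit

theorem commutantCompressionKer_eq_bot_of_isExtremalIn (hdil : IsMinimalStinespring Φ π J)
    (hext : IsExtremalIn (CPWithUnit A H P) Φ) : commutantCompressionKer π J = ⊥ := by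
  refine (Submodule.eq_bot_iff _).2 fun E hE =>
    Submodule.eq_zero_of_forall_isSelfAdjoint (S := commutantCompressionKer π J)
      (fun F hF => star_mem_commutantCompressionKer hF) (fun F hF hsa => ?_) hE
  by_contra hF0
  have hscaled := hdil.eq_zero_of_isExtremalIn_of_norm_le_one hext
    (Submodule.smul_of_tower_mem _ ‖F‖⁻¹ hF) ((IsSelfAdjoint.all _).smul hsa)
    (by rw [norm_smul, norm_inv, norm_norm, inv_mul_cancel₀ (norm_ne_zero_iff.2 hF0)])
  simp [hF0] at hscaled

theorem isExtremalIn_iff_commutantCompressionKer_eq_bot (hdil : IsMinimalStinespring Φ π J)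
    (hΦ : Φ ∈ CPWithUnit A H P) :
    IsExtremalIn (CPWithUnit A H P) Φ ↔ commutantCompressionKer π J = ⊥ :=
  ⟨hdil.commutantCompressionKer_eq_bot_of_isExtremalIn,
    hdil.isExtremalIn_of_commutantCompressionKer_eq_bot hΦ⟩

end IsMinimalStinespring

theorem cp_extremal_iff_general
    {A : Type*} [CStarAlgebra A]
    {H M : Type*} [NormedAddCommGroup H] [InnerProductSpace ℂ H] [CompleteSpace H]
    [NormedAddCommGroup M] [InnerProductSpace ℂ M] [CompleteSpace M]
    (P : H →L[ℂ] H)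
    (Φ : A →ₗ[ℂ] H →L[ℂ] H) (hΦ : Φ ∈ CPWithUnit A H P)
    (π : A →⋆ₐ[ℂ] (M →L[ℂ] M)) (J : H →L[ℂ] M)
    (hdil : IsMinimalStinespring Φ π J) :
    IsExtremalIn (CPWithUnit A H P) Φ ↔
      ∀ E : M →L[ℂ] M, (∀ a : A, Commute E (π a)) →
        (ContinuousLinearMap.adjoint J) ∘L E ∘L J = 0 → E = 0 := by
  rw [hdil.isExtremalIn_iff_commutantCompressionKer_eq_bot hΦ, Submodule.eq_bot_iff]
  exact ⟨fun h E hcomm hE => h E ⟨hcomm, hE⟩, fun h E hE => h E hE.1 hE.2⟩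

/-- **Arveson's extremality criterion** (Theorem 3 of the paper). Let `Φ ∈ CP_P(A;H)`
have minimal Stinespring dilation `(M, π, J)`. Then `Φ` is extremal in `CP_P(A;H)` if and
only if every `E ∈ L(M)` commuting with the range of `π` and satisfying `J⋆ E J = 0`
vanishes. -/
theorem cp_extremal_iff
    {A : Type*} [CStarAlgebra A]
    {H M : Type*} [NormedAddCommGroup H] [InnerProductSpace ℂ H] [CompleteSpace H]
    [NormedAddCommGroup M] [InnerProductSpace ℂ M] [CompleteSpace M]
    (P : H →L[ℂ] H) (hP : P.IsPositive)
    (Φ : A →ₗ[ℂ] H →L[ℂ] H) (hΦ : Φ ∈ CPWithUnit A H P)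
    (π : A →⋆ₐ[ℂ] (M →L[ℂ] M)) (J : H →L[ℂ] M)
    (hdil : IsMinimalStinespring Φ π J) :
    IsExtremalIn (CPWithUnit A H P) Φ ↔
      ∀ E : M →L[ℂ] M, (∀ a : A, Commute E (π a)) →
        (ContinuousLinearMap.adjoint J) ∘L E ∘L J = 0 → E = 0 :=
  cp_extremal_iff_general P Φ hΦ π J hdil
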